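/- Let X ∼ Gumbel(0, τ) and κ a positive integer. Then X is equal in distribution to the sum of κ i.i.d. random variables each distributed as the Sum-of-Gamma distribution SoG(κ, τ), defined as the limit as s → ∞ of (τ/κ)[Σ_{i=1}^s Gamma(1/κ, κ/i) − log s], where the Gamma summands are independent. -/

import Mathlib

/-!
Row `i` of the array contributes `∑ⱼ G i j`, a sum of `κ` independent Gamma(1/κ) variables of
rate `(i + 1)/κ`. Gamma laws of a common rate convolve by adding shapes (substituting `y = z v`
turns the convolution integral into the integral of a Beta density), so this row sum is
exponential of rate `(i + 1)/κ`. A sum of independent exponentials of rates `r, 2r, …, sr` has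
the law of the maximum of `s` i.i.d. Exp(r) variables (Rényi), i.e. the CDF `(1 - e^{-rt})^s`,
which one convolution per step confirms. The event in the theorem is
`{∑_{i<s} ∑ⱼ G i j ≤ κ (x/τ + log s)}`, so its probability is `(1 - e^{-x/τ}/s)^s`, and this tends
to `exp(-e^{-x/τ})`.
-/

open MeasureTheory ProbabilityTheory Real Filter

/-- CDF of the Gumbel(0, τ) distribution. -/
noncomputable def gumbelCDF (τ x : ℝ) : ℝ := Real.exp (-Real.exp (-(x / τ)))

open Set Topology
open scoped ENNReal

theorem Real.lintegral_eq_ofReal_mul_lintegral_comp_mul_left {c : ℝ} (hc : 0 < c)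
    (f : ℝ → ℝ≥0∞) : ∫⁻ x, f x = ENNReal.ofReal c * ∫⁻ v, f (c * v) := by
  rw [show ∫⁻ v, f (c * v) = ∫⁻ x, f x ∂(volume.map (c * ·)) from
      (lintegral_map_equiv f (MeasurableEquiv.mulLeft₀ c hc.ne')).symm,
    Real.map_volume_mul_left hc.ne', lintegral_smul_measure, smul_eq_mul, ← mul_assoc,
    ← ENNReal.ofReal_mul hc.le, abs_of_pos (inv_pos.2 hc), mul_inv_cancel₀ hc.ne',
    ENNReal.ofReal_one, one_mul]

namespace MeasureTheory.Measure

theorem conv_apply {M : Type*} [AddMonoid M] [MeasurableSpace M] [MeasurableAdd₂ M]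
    (μ ν : Measure M) [SFinite ν] {s : Set M} (hs : MeasurableSet s) :
    (μ ∗ ν) s = ∫⁻ x, ν ((x + ·) ⁻¹' s) ∂μ := by
  rw [conv, map_apply measurable_add hs, prod_apply (measurable_add hs)]
  rfl

theorem withDensity_conv_withDensity {G : Type*} [AddGroup G] [MeasurableSpace G]
    [MeasurableAdd₂ G] [MeasurableNeg G] (μ : Measure G) [SFinite μ] [μ.IsAddLeftInvariant]
    {f g : G → ℝ≥0∞} (hf : Measurable f) (hg : Measurable g) :
    μ.withDensity f ∗ μ.withDensity g = μ.withDensity (f ⋆ₗ[μ] g) := by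
  ext s hs
  have hshift (x : G) :
      μ.withDensity g ((x + ·) ⁻¹' s) = ∫⁻ z in s, g (-x + z) ∂μ := by
    rw [withDensity_apply _ (measurable_const_add x hs),
      ← (measurePreserving_add_left μ x).setLIntegral_comp_preimage hs
        (f := fun z ↦ g (-x + z)) (by fun_prop)]
    simp only [neg_add_cancel_left]
  have hmeas : Measurable fun x ↦ μ.withDensity g ((x + ·) ⁻¹' s) :=
    measurable_measure_prodMk_left (measurable_add hs)
  rw [conv_apply _ _ hs, withDensity_apply _ hs,
    lintegral_withDensity_eq_lintegral_mul _ hf hmeas]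
  simp_rw [Pi.mul_apply, hshift]
  calc ∫⁻ x, f x * ∫⁻ z in s, g (-x + z) ∂μ ∂μ
      = ∫⁻ x, ∫⁻ z in s, f x * g (-x + z) ∂μ ∂μ :=
        lintegral_congr fun x ↦ (lintegral_const_mul _ (by fun_prop)).symm
    _ = ∫⁻ z in s, (f ⋆ₗ[μ] g) z ∂μ := lintegral_lintegral_swap (by fun_prop)

end MeasureTheory.Measure

@[fun_prop]
theorem measurable_gammaPDF (a r : ℝ) : Measurable (gammaPDF a r) :=
  (measurable_gammaPDFReal a r).ennreal_ofReal

theorem ofReal_mul_gammaPDF_mul_gammaPDF {a b r z v : ℝ} (ha : 0 < a) (hb : 0 < b)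
    (hr : 0 < r) (hz : 0 < z) (hv0 : v ≠ 0) (hv1 : v ≠ 1) :
    ENNReal.ofReal z * (gammaPDF a r (z * v) * gammaPDF b r (-(z * v) + z)) =
      gammaPDF (a + b) r z * betaPDF a b v := by
  rcases lt_or_gt_of_ne hv0 with hv | hv
  · rw [gammaPDF_of_neg (mul_neg_of_pos_of_neg hz hv), betaPDF_eq_zero_of_nonpos hv.le]
    simp
  rcases lt_or_gt_of_ne hv1 with hv' | hv'
  · have hzv : -(z * v) + z = z * (1 - v) := by ring
    rw [hzv, gammaPDF_of_nonneg (by positivity), gammaPDF_of_nonneg (by nlinarith),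
      gammaPDF_of_nonneg hz.le, betaPDF_of_pos_lt_one hv hv',
      ← ENNReal.ofReal_mul (by positivity), ← ENNReal.ofReal_mul hz.le,
      ← ENNReal.ofReal_mul (by positivity)]
    congr 1
    have h1v : 0 < 1 - v := by linarith
    rw [mul_rpow hz.le hv.le, mul_rpow hz.le h1v.le, beta, rpow_add hr,
      show a + b - 1 = (a - 1) + (b - 1) + 1 by ring, rpow_add hz, rpow_add hz, rpow_one,
      show -(r * z) = -(r * (z * v)) + -(r * (z * (1 - v))) by ring, exp_add]
    have := Gamma_pos_of_pos ha
    have := Gamma_pos_of_pos hb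
    have := Gamma_pos_of_pos (add_pos ha hb)
    field_simp
  · rw [gammaPDF_of_neg (show -(z * v) + z < 0 by nlinarith), betaPDF_eq_zero_of_one_le hv'.le]
    simp

theorem lconvolution_gammaPDF_of_pos {a b r z : ℝ} (ha : 0 < a) (hb : 0 < b) (hr : 0 < r)
    (hz : 0 < z) : (gammaPDF a r ⋆ₗ gammaPDF b r) z = gammaPDF (a + b) r z := by
  rw [lconvolution_def, Real.lintegral_eq_ofReal_mul_lintegral_comp_mul_left hz,
    ← lintegral_const_mul' _ _ ENNReal.ofReal_ne_top]
  calc ∫⁻ v, ENNReal.ofReal z * (gammaPDF a r (z * v) * gammaPDF b r (-(z * v) + z))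
      = ∫⁻ v, gammaPDF (a + b) r z * betaPDF a b v := by
        refine lintegral_congr_ae ?_
        filter_upwards [(countable_singleton (0 : ℝ)).ae_notMem volume,
          (countable_singleton (1 : ℝ)).ae_notMem volume] with v hv0 hv1
        exact ofReal_mul_gammaPDF_mul_gammaPDF ha hb hr hz hv0 hv1
    _ = gammaPDF (a + b) r z := by
        have hβ : Measurable (betaPDF a b) := (measurable_betaPDFReal a b).ennreal_ofReal
        rw [lintegral_const_mul _ hβ, lintegral_betaPDF_eq_one ha hb, mul_one]

theorem lconvolution_gammaPDF_of_neg {a b r z : ℝ} (hz : z < 0) :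
    (gammaPDF a r ⋆ₗ gammaPDF b r) z = 0 := by
  rw [lconvolution_def, ← lintegral_zero]
  refine lintegral_congr fun y ↦ ?_
  rcases lt_or_ge y 0 with hy | hy
  · simp [gammaPDF_of_neg hy]
  · simp [gammaPDF_of_neg (show -y + z < 0 by linarith)]

theorem gammaMeasure_conv_gammaMeasure {a b r : ℝ} (ha : 0 < a) (hb : 0 < b) (hr : 0 < r) :
    gammaMeasure a r ∗ gammaMeasure b r = gammaMeasure (a + b) r := by
  rw [gammaMeasure, gammaMeasure,
    Measure.withDensity_conv_withDensity _ (by fun_prop) (by fun_prop), gammaMeasure]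
  refine withDensity_congr_ae ?_
  filter_upwards [(countable_singleton (0 : ℝ)).ae_notMem volume] with z hz
  rcases lt_or_gt_of_ne hz with hz | hz
  · rw [lconvolution_gammaPDF_of_neg hz, gammaPDF_of_neg hz]
  · exact lconvolution_gammaPDF_of_pos ha hb hr hz

noncomputable def maxExpCDF (r : ℝ) (s : ℕ) (t : ℝ) : ℝ :=
  if 0 ≤ t then (1 - exp (-(r * t))) ^ s else 0

@[fun_prop]
theorem measurable_maxExpCDF (r : ℝ) (s : ℕ) : Measurable (maxExpCDF r s) :=
  Measurable.ite measurableSet_Ici (by fun_prop) measurable_const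

theorem integral_mul_exp_mul_exp_sub_exp_pow (r u : ℝ) (s : ℕ) :
    ∫ x in 0..u, (s + 1) * r * exp (-(r * x)) * (exp (-(r * x)) - exp (-(r * u))) ^ s =
      (1 - exp (-(r * u))) ^ (s + 1) := by
  have hderiv (x : ℝ) : HasDerivAt (fun x ↦ -(exp (-(r * x)) - exp (-(r * u))) ^ (s + 1))
      ((s + 1) * r * exp (-(r * x)) * (exp (-(r * x)) - exp (-(r * u))) ^ s) x := by
    have := ((((hasDerivAt_id x).const_mul r).fun_neg.exp.sub_const
      (exp (-(r * u)))).fun_pow (s + 1)).fun_neg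
    simp only [id, Nat.add_sub_cancel] at this
    exact this.congr_deriv (by push_cast; ring)
  rw [intervalIntegral.integral_eq_sub_of_hasDerivAt (fun x _ ↦ hderiv x)
    (by apply Continuous.intervalIntegrable; fun_prop)]
  simp

theorem exponentialPDF_mul_ofReal_maxExpCDF_sub {r : ℝ} (hr : 0 ≤ r) (u x : ℝ) (s : ℕ) :
    exponentialPDF ((s + 1) * r) x * ENNReal.ofReal (maxExpCDF r s (u - x)) =
      (Icc 0 u).indicator (fun x ↦ ENNReal.ofReal
        ((s + 1) * r * exp (-(r * x)) * (exp (-(r * x)) - exp (-(r * u))) ^ s)) x := by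
  by_cases hx : x ∈ Icc 0 u
  · rw [indicator_of_mem hx, exponentialPDF_of_nonneg hx.1, maxExpCDF,
      if_pos (sub_nonneg.2 hx.2), ← ENNReal.ofReal_mul (by positivity)]
    congr 1
    have h1 : exp (-((s + 1) * r * x)) = exp (-(r * x)) * exp (-(r * x)) ^ s := by
      rw [← exp_nat_mul, ← exp_add]; ring_nf
    have h2 : exp (-(r * (u - x))) = exp (-(r * u)) / exp (-(r * x)) := by
      rw [← exp_sub]; ring_nf
    rw [h1, h2, one_sub_div (exp_pos _).ne', div_pow]
    field_simp
  · rw [indicator_of_notMem hx]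
    rcases not_and_or.1 hx with hx | hx
    · simp [exponentialPDF_of_neg (not_le.1 hx)]
    · simp [maxExpCDF, show ¬ 0 ≤ u - x by linarith [not_le.1 hx]]

theorem expMeasure_conv_apply_Iic {r : ℝ} (hr : 0 ≤ r) {s : ℕ} {ν : Measure ℝ} [SFinite ν]
    (hν : ∀ t, ν (Iic t) = ENNReal.ofReal (maxExpCDF r s t)) (u : ℝ) :
    (expMeasure ((s + 1) * r) ∗ ν) (Iic u) = ENNReal.ofReal (maxExpCDF r (s + 1) u) := by
  have hexp : expMeasure ((s + 1) * r) = volume.withDensity (exponentialPDF ((s + 1) * r)) := rfl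
  have hpdf : Measurable (exponentialPDF ((s + 1) * r)) :=
    (measurable_exponentialPDFReal _).ennreal_ofReal
  simp_rw [Measure.conv_apply _ _ measurableSet_Iic, preimage_const_add_Iic, hν, hexp]
  rw [lintegral_withDensity_eq_lintegral_mul _ hpdf (by fun_prop)]
  simp_rw [Pi.mul_apply, exponentialPDF_mul_ofReal_maxExpCDF_sub hr]
  rw [lintegral_indicator measurableSet_Icc, maxExpCDF]
  by_cases hu : 0 ≤ u
  · have hnonneg : ∀ x ∈ Icc 0 u,
        0 ≤ (s + 1) * r * exp (-(r * x)) * (exp (-(r * x)) - exp (-(r * u))) ^ s := by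
      intro x hx
      have : exp (-(r * u)) ≤ exp (-(r * x)) := exp_le_exp.2 (by nlinarith [hx.2])
      have : 0 ≤ exp (-(r * x)) - exp (-(r * u)) := by linarith
      positivity
    rw [← ofReal_integral_eq_lintegral_ofReal (by apply Continuous.integrableOn_Icc; fun_prop)
      ((ae_restrict_iff' measurableSet_Icc).2 (Eventually.of_forall hnonneg)),
      integral_Icc_eq_integral_Ioc, ← intervalIntegral.integral_of_le hu,
      integral_mul_exp_mul_exp_sub_exp_pow, if_pos hu]
  · rw [Icc_eq_empty hu, Measure.restrict_empty, lintegral_zero_measure, if_neg hu,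
      ENNReal.ofReal_zero]

section Sums

variable {Ω : Type*} [MeasurableSpace Ω] {P : Measure Ω}

theorem ProbabilityTheory.iIndepFun.indepFun_finsetSum_finsetSum {ι β : Type*}
    [MeasurableSpace β] [AddCommMonoid β] [MeasurableAdd₂ β] {f : ι → Ω → β}
    (h : iIndepFun f P) (hf : ∀ i, Measurable (f i)) {S T : Finset ι} (hST : Disjoint S T) :
    IndepFun (∑ i ∈ S, f i) (∑ i ∈ T, f i) P := by
  have := (h.indepFun_finset S T hST hf).comp (φ := fun v ↦ ∑ i, v i) (ψ := fun v ↦ ∑ i, v i)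
    (by fun_prop) (by fun_prop)
  convert this using 1 <;> ext ω <;>
    simp only [Finset.sum_apply, Function.comp_apply, Finset.univ_eq_attach] <;>
    exact (Finset.sum_attach _ fun i ↦ f i ω).symm

theorem map_sum_eq_gammaMeasure {ι : Type*} {X : ι → Ω → ℝ} (hindep : iIndepFun X P)
    (hX : ∀ i, Measurable (X i)) {a : ι → ℝ} {r : ℝ} (ha : ∀ i, 0 < a i) (hr : 0 < r)
    (hlaw : ∀ i, P.map (X i) = gammaMeasure (a i) r) {t : Finset ι} (ht : t.Nonempty) :
    P.map (∑ i ∈ t, X i) = gammaMeasure (∑ i ∈ t, a i) r := by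
  have := hindep.isProbabilityMeasure
  induction ht using Finset.Nonempty.cons_induction with
  | singleton j => simpa using hlaw j
  | cons j t hj ht ih =>
    rw [Finset.sum_cons, Finset.sum_cons,
      (hindep.indepFun_finsetSum_of_notMem hX hj).symm.map_add_eq_map_conv_map (hX j)
        (by fun_prop),
      hlaw j, ih, gammaMeasure_conv_gammaMeasure (ha j) (t.sum_pos (fun i _ ↦ ha i) ht) hr]

theorem ProbabilityTheory.iIndepFun.indepFun_sum_range_rowSum {ι : Type*} [Fintype ι]
    {G : ℕ → ι → Ω → ℝ} (h : iIndepFun (fun p : ℕ × ι ↦ G p.1 p.2) P)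
    (hG : ∀ i j, Measurable (G i j)) (s : ℕ) :
    IndepFun (∑ i ∈ Finset.range s, ∑ j, G i j) (∑ j, G s j) P := by
  have := h.indepFun_finsetSum_finsetSum (fun p ↦ hG p.1 p.2)
    (S := Finset.range s ×ˢ Finset.univ) (T := {s} ×ˢ Finset.univ)
    (Finset.disjoint_product.2 (.inl (by simp)))
  simpa [Finset.sum_product] using this

variable [IsProbabilityMeasure P]

theorem map_sum_range_Iic_eq_maxExpCDF {X : ℕ → Ω → ℝ} {r : ℝ} (hr : 0 ≤ r)
    (hX : ∀ i, Measurable (X i)) (hindep : ∀ s, IndepFun (∑ i ∈ Finset.range s, X i) (X s) P)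
    (hlaw : ∀ i, P.map (X i) = expMeasure ((i + 1) * r)) (s : ℕ) (u : ℝ) :
    P.map (∑ i ∈ Finset.range s, X i) (Iic u) = ENNReal.ofReal (maxExpCDF r s u) := by
  induction s generalizing u with
  | zero =>
    rw [Finset.sum_range_zero, show (0 : Ω → ℝ) = fun _ ↦ 0 from rfl, Measure.map_const]
    by_cases hu : 0 ≤ u <;> simp [maxExpCDF, hu]
  | succ s ih =>
    rw [Finset.sum_range_succ_comm,
      (hindep s).symm.map_add_eq_map_conv_map (hX s) (by fun_prop), hlaw s]
    exact expMeasure_conv_apply_Iic hr ih u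

end Sums

theorem tendsto_maxExpCDF_add_log_div {r : ℝ} (hr : 0 < r) (y : ℝ) :
    Tendsto (fun s : ℕ ↦ maxExpCDF r s ((y + log s) / r)) atTop (𝓝 (exp (-exp (-y)))) := by
  refine Tendsto.congr' ?_ (tendsto_one_add_div_pow_exp (-exp (-y)))
  filter_upwards [tendsto_natCast_atTop_atTop.eventually_gt_atTop (exp (-y))] with s hs
  have hs0 : (0 : ℝ) < s := (exp_pos _).trans hs
  have hlog : -y < log s := by rw [← log_exp (-y)]; exact log_lt_log (exp_pos _) hs
  rw [maxExpCDF, if_pos (div_nonneg (by linarith) hr.le), mul_div_cancel₀ _ hr.ne', neg_add,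
    exp_add, exp_neg (log s), exp_log hs0]
  ring

/-- A Gumbel(0,τ) r.v. equals in distribution the sum of `κ` i.i.d. Sum-of-Gamma
variables `SoG(κ,τ) = lim_{s→∞} (τ/κ)[Σ_{i=1}^s Gamma(1/κ, κ/i) − log s]`: the CDF of
the sum of the truncated Sum-of-Gamma variables converges pointwise to the Gumbel CDF. -/
theorem gumbel_eq_sum_of_gamma {Ω : Type*} [MeasurableSpace Ω] (P : Measure Ω)
    [IsProbabilityMeasure P] (τ : ℝ) (hτ : 0 < τ) (κ : ℕ) (hκ : 0 < κ)
    (G : ℕ → Fin κ → Ω → ℝ) (hmeas : ∀ i j, Measurable (G i j))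
    (hindep : iIndepFun
      (fun p : ℕ × Fin κ => G p.1 p.2) P)
    (hlaw : ∀ i j, Measure.map (G i j) P
      = gammaMeasure (1 / (κ : ℝ)) (((i : ℝ) + 1) / κ)) (x : ℝ) :
    Tendsto (fun s : ℕ =>
        P {ω | ∑ j : Fin κ,
            (τ / κ) * ((∑ i ∈ Finset.range s, G i j ω) - Real.log s) ≤ x})
      atTop (nhds (ENNReal.ofReal (gumbelCDF τ x))) := by
  have hκ' : (0 : ℝ) < κ := by exact_mod_cast hκ
  have : NeZero κ := ⟨hκ.ne'⟩
  have hlaw_row (i : ℕ) : P.map (∑ j, G i j) = expMeasure ((i + 1) * (1 / κ)) := by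
    rw [map_sum_eq_gammaMeasure (hindep.precomp (Prod.mk_right_injective i)) (hmeas i)
      (fun _ ↦ by positivity) (by positivity) (hlaw i) Finset.univ_nonempty]
    simp [expMeasure, hκ'.ne', div_eq_mul_inv]
  have hcdf (s : ℕ) :
      P {ω | ∑ j : Fin κ, (τ / κ) * ((∑ i ∈ Finset.range s, G i j ω) - log s) ≤ x} =
        ENNReal.ofReal (maxExpCDF (1 / κ) s ((x / τ + log s) / (1 / κ))) := by
    rw [← map_sum_range_Iic_eq_maxExpCDF (by positivity) (fun i ↦ by fun_prop)
      (hindep.indepFun_sum_range_rowSum hmeas) hlaw_row, Measure.map_apply (by fun_prop)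
      measurableSet_Iic]
    congr 1
    ext ω
    simp only [mem_ofPred_eq, mem_preimage, mem_Iic, Finset.sum_apply]
    rw [← Finset.mul_sum, Finset.sum_sub_distrib, Finset.sum_comm,
      show (x / τ + log s) / (1 / κ) = x / (τ / κ) + κ * log s by field_simp,
      ← sub_le_iff_le_add, le_div_iff₀' (by positivity)]
    simp
  simp_rw [hcdf]
  exact (ENNReal.continuous_ofReal.tendsto _).comp
    (tendsto_maxExpCDF_add_log_div (by positivity) (x / τ))
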